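/- For every p ∈ (1,2) and all real numbers u, v > 0, the p-th moment of each coordinate under the harmonic measure dominates the p-th power of the starting coordinate: ∫ y₁^p Q_{(u,v)}(dy) ≥ u^p and ∫ y₂^p Q_{(u,v)}(dy) ≥ v^p. -/

import Mathlib

open MeasureTheory Real Set

noncomputable def Qdens (u v t : ℝ) : ℝ :=
  (4 / π) * (u * v * t) / (4 * u ^ 2 * v ^ 2 + (t ^ 2 + v ^ 2 - u ^ 2) ^ 2)

/-- The harmonic measure `Q_x` of planar Brownian motion started at `x ∈ [0,∞)²` and
stopped upon leaving the open quadrant `(0,∞)²`; for boundary points it is `δ_x`. -/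
noncomputable def Qmeas (x : ℝ × ℝ) : Measure (ℝ × ℝ) :=
  if 0 < x.1 ∧ 0 < x.2 then
    Measure.map (fun t => (t, (0 : ℝ)))
      ((volume.restrict (Ioi (0 : ℝ))).withDensity fun t => ENNReal.ofReal (Qdens x.1 x.2 t))
    + Measure.map (fun t => ((0 : ℝ), t))
      ((volume.restrict (Ioi (0 : ℝ))).withDensity fun t => ENNReal.ofReal (Qdens x.2 x.1 t))
  else Measure.dirac x

/-!
On the half-axis `{(t, 0) : t > 0}` the measure `Q_{(u,v)}` has density `Qdens u v`, the
difference of the half-plane Poisson kernels at `u + iv` and at its mirror image `-u + iv`.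
Hence explicit antiderivatives (arctangents and a logarithm) show that this part has mass
`m = (2/π) arctan (u/v) ≤ 1` and first moment exactly `u`, while the `t⁻³` decay of the density
makes the `p`-th moment finite for `p < 2`. Jensen's inequality for `t ↦ t ^ p` then gives
`u ^ p ≤ m ^ (p - 1) ∫ t ^ p ≤ ∫ t ^ p`; the other half-axis contributes nothing to `∫ y₁ ^ p`.
The bound for `y₂` follows from the symmetry `swap_* Q_{(u,v)} = Q_{(v,u)}`.
-/

open Filter Topology

section Density

variable {u v : ℝ}

lemma Qdens_nonneg (hu : 0 ≤ u) (hv : 0 ≤ v) {t : ℝ} (ht : 0 ≤ t) : 0 ≤ Qdens u v t := by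
  unfold Qdens
  positivity

lemma Qdens_denominator_eq_mul (u v t : ℝ) :
    4 * u ^ 2 * v ^ 2 + (t ^ 2 + v ^ 2 - u ^ 2) ^ 2
      = ((t - u) ^ 2 + v ^ 2) * ((t + u) ^ 2 + v ^ 2) := by
  ring

lemma continuous_Qdens (hv : 0 < v) : Continuous (Qdens u v) := by
  unfold Qdens
  simp only [Qdens_denominator_eq_mul]
  exact Continuous.div (by fun_prop) (by fun_prop) fun t => by positivity

lemma Qdens_eq_sub (hv : 0 < v) (t : ℝ) :
    Qdens u v t = (v / ((t - u) ^ 2 + v ^ 2) - v / ((t + u) ^ 2 + v ^ 2)) / π := by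
  unfold Qdens
  rw [Qdens_denominator_eq_mul]
  field_simp
  ring

lemma Qdens_mul_pow_three_le (hu : 0 < u) (hv : 0 < v) {t : ℝ} (ht : 2 * u ≤ t) :
    Qdens u v t * t ^ 3 ≤ 16 * u * v / π := by
  have hD : 0 < 4 * u ^ 2 * v ^ 2 + (t ^ 2 + v ^ 2 - u ^ 2) ^ 2 := by positivity
  have hsq : 3 / 4 * t ^ 2 ≤ t ^ 2 + v ^ 2 - u ^ 2 := by nlinarith
  have hquart : t ^ 4 ≤ 4 * (4 * u ^ 2 * v ^ 2 + (t ^ 2 + v ^ 2 - u ^ 2) ^ 2) := by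
    nlinarith [pow_le_pow_left₀ (by positivity) hsq 2]
  have hcancel : 4 / π * (u * v * t) * t ^ 3 * π = 4 * (u * v) * t ^ 4 := by
    field_simp
  unfold Qdens
  rw [div_mul_eq_mul_div, div_le_div_iff₀ hD pi_pos, hcancel]
  nlinarith [mul_le_mul_of_nonneg_left hquart (by positivity : 0 ≤ u * v)]

end Density

section Primitives

variable {u v : ℝ}

noncomputable def QdensPrimitive (u v t : ℝ) : ℝ :=
  (arctan ((t - u) / v) - arctan ((t + u) / v)) / π

noncomputable def QdensMomentPrimitive (u v t : ℝ) : ℝ :=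
  (v / 2 * (log ((t - u) ^ 2 + v ^ 2) - log ((t + u) ^ 2 + v ^ 2))
    + u * (arctan ((t - u) / v) + arctan ((t + u) / v))) / π

lemma hasDerivAt_QdensPrimitive (hv : 0 < v) (t : ℝ) :
    HasDerivAt (QdensPrimitive u v) (Qdens u v t) t := by
  have h₁ := (((hasDerivAt_id' t).sub_const u).div_const v).arctan
  have h₂ := (((hasDerivAt_id' t).add_const u).div_const v).arctan
  refine ((h₁.sub h₂).div_const π).congr_deriv ?_
  rw [Qdens_eq_sub hv]
  field_simp
  ring

lemma hasDerivAt_QdensMomentPrimitive (hv : 0 < v) (t : ℝ) :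
    HasDerivAt (QdensMomentPrimitive u v) (t * Qdens u v t) t := by
  have hA : (t - u) ^ 2 + v ^ 2 ≠ 0 := by positivity
  have hB : (t + u) ^ 2 + v ^ 2 ≠ 0 := by positivity
  have h₁ := ((((hasDerivAt_id' t).sub_const u).fun_pow 2).add_const (v ^ 2)).log hA
  have h₂ := ((((hasDerivAt_id' t).add_const u).fun_pow 2).add_const (v ^ 2)).log hB
  have h₃ := (((hasDerivAt_id' t).sub_const u).div_const v).arctan
  have h₄ := (((hasDerivAt_id' t).add_const u).div_const v).arctan
  refine ((((h₁.sub h₂).const_mul (v / 2)).add ((h₃.add h₄).const_mul u)).div_const π)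
    |>.congr_deriv ?_
  rw [Qdens_eq_sub hv]
  field_simp
  ring

lemma tendsto_arctan_div_atTop (hv : 0 < v) (s : ℝ) :
    Tendsto (fun t => arctan ((t + s) / v)) atTop (𝓝 (π / 2)) :=
  tendsto_nhds_of_tendsto_nhdsWithin tendsto_arctan_atTop |>.comp <|
    (tendsto_atTop_add_const_right atTop s tendsto_id).atTop_div_const hv

lemma tendsto_log_sub_log_atTop (u : ℝ) (hv : 0 < v) :
    Tendsto (fun t => log ((t - u) ^ 2 + v ^ 2) - log ((t + u) ^ 2 + v ^ 2)) atTop (𝓝 0) := by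
  -- substitute `s = t⁻¹`; both logarithms lose the same `log (t ^ 2)`
  have hF : ContinuousAt
      (fun s => log ((1 - u * s) ^ 2 + (v * s) ^ 2) - log ((1 + u * s) ^ 2 + (v * s) ^ 2)) 0 := by
    fun_prop (disch := norm_num)
  have h := hF.tendsto.comp tendsto_inv_atTop_zero
  simp only [mul_zero, sub_zero, add_zero, one_pow, sub_self] at h
  refine h.congr' ?_
  filter_upwards [eventually_gt_atTop 0] with t ht
  have hA : (1 - u * t⁻¹) ^ 2 + (v * t⁻¹) ^ 2 = ((t - u) ^ 2 + v ^ 2) / t ^ 2 := by field_simp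
  have hB : (1 + u * t⁻¹) ^ 2 + (v * t⁻¹) ^ 2 = ((t + u) ^ 2 + v ^ 2) / t ^ 2 := by field_simp
  simp only [Function.comp_apply, hA, hB]
  rw [log_div (by positivity) (by positivity), log_div (by positivity) (by positivity)]
  ring

lemma tendsto_QdensPrimitive_atTop (hv : 0 < v) :
    Tendsto (QdensPrimitive u v) atTop (𝓝 0) := by
  have h := ((tendsto_arctan_div_atTop hv (-u)).sub (tendsto_arctan_div_atTop hv u)).div_const π
  simp only [← sub_eq_add_neg, sub_self, zero_div] at h
  exact h

lemma tendsto_QdensMomentPrimitive_atTop (hv : 0 < v) :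
    Tendsto (QdensMomentPrimitive u v) atTop (𝓝 u) := by
  have harctan := (tendsto_arctan_div_atTop hv (-u)).add (tendsto_arctan_div_atTop hv u)
  have h := (((tendsto_log_sub_log_atTop u hv).const_mul (v / 2)).add
    (harctan.const_mul u)).div_const π
  convert h using 2
  · simp only [QdensMomentPrimitive, sub_eq_add_neg]
  · field_simp
    ring

end Primitives

section Integrals

variable {u v : ℝ}

lemma integral_Qdens (hu : 0 < u) (hv : 0 < v) :
    ∫ t in Ioi 0, Qdens u v t = 2 / π * arctan (u / v) := by
  rw [integral_Ioi_of_hasDerivAt_of_nonneg' (fun t _ => hasDerivAt_QdensPrimitive hv t)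
    (fun t ht => Qdens_nonneg hu.le hv.le (le_of_lt ht)) (tendsto_QdensPrimitive_atTop hv)]
  simp only [QdensPrimitive, zero_sub, zero_add, neg_div, arctan_neg]
  ring

lemma integral_Qdens_le_one (hu : 0 < u) (hv : 0 < v) : ∫ t in Ioi 0, Qdens u v t ≤ 1 := by
  rw [integral_Qdens hu hv, div_mul_eq_mul_div, div_le_one pi_pos]
  linarith [arctan_lt_pi_div_two (u / v)]

lemma integral_mul_Qdens (hu : 0 < u) (hv : 0 < v) :
    ∫ t in Ioi 0, t * Qdens u v t = u := by
  rw [integral_Ioi_of_hasDerivAt_of_nonneg' (fun t _ => hasDerivAt_QdensMomentPrimitive hv t)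
    (fun t ht => mul_nonneg (le_of_lt ht) (Qdens_nonneg hu.le hv.le (le_of_lt ht)))
    (tendsto_QdensMomentPrimitive_atTop hv)]
  simp only [QdensMomentPrimitive, zero_sub, zero_add, neg_div, arctan_neg, neg_sq, sub_self]
  ring

end Integrals

section Integrability

variable {p u v : ℝ}

lemma integrableOn_rpow_mul_Qdens (hp0 : 0 ≤ p) (hp : p < 2) (hu : 0 < u) (hv : 0 < v) :
    IntegrableOn (fun t => t ^ p * Qdens u v t) (Ioi 0) := by
  have hloc : LocallyIntegrableOn (fun t => t ^ p * Qdens u v t) (Ici 0) :=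
    ((continuous_rpow_const hp0).mul (continuous_Qdens hv)).locallyIntegrable
      |>.locallyIntegrableOn _
  have hO : (fun t => t ^ p * Qdens u v t) =O[atTop] fun t => t ^ (p - 3) := by
    refine Asymptotics.IsBigO.of_bound (16 * u * v / π) ?_
    filter_upwards [eventually_ge_atTop (2 * u)] with t ht
    have ht0 : 0 < t := by linarith
    rw [norm_of_nonneg (mul_nonneg (rpow_nonneg ht0.le p) (Qdens_nonneg hu.le hv.le ht0.le)),
      norm_of_nonneg (rpow_nonneg ht0.le _)]
    calc t ^ p * Qdens u v t = t ^ (p - 3) * (Qdens u v t * t ^ 3) := by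
          rw [rpow_sub ht0, rpow_ofNat]
          field_simp
      _ ≤ t ^ (p - 3) * (16 * u * v / π) :=
          mul_le_mul_of_nonneg_left (Qdens_mul_pow_three_le hu hv ht) (rpow_nonneg ht0.le _)
      _ = 16 * u * v / π * t ^ (p - 3) := mul_comm _ _
  have hdecay := integrableAtFilter_rpow_atTop_iff.2 (by linarith : p - 3 < -1)
  exact (hloc.integrableOn_of_isBigO_atTop hO hdecay).mono_set Ioi_subset_Ici_self

end Integrability

section WithDensity

variable {α : Type*} [MeasurableSpace α] {μ : Measure α} {s : Set α} {f : α → ℝ}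

theorem integral_restrict_withDensity_ofReal (hs : MeasurableSet s) (hfm : Measurable f)
    (hf : ∀ x ∈ s, 0 ≤ f x) (g : α → ℝ) :
    ∫ x, g x ∂(μ.restrict s).withDensity (fun x => ENNReal.ofReal (f x))
      = ∫ x in s, g x * f x ∂μ := by
  rw [integral_withDensity_eq_integral_toReal_smul hfm.ennreal_ofReal
    (ae_of_all _ fun _ => ENNReal.ofReal_lt_top)]
  refine setIntegral_congr_fun hs fun x hx => ?_
  rw [ENNReal.toReal_ofReal (hf x hx), smul_eq_mul, mul_comm]

theorem integrable_restrict_withDensity_ofReal_iff (hs : MeasurableSet s) (hfm : Measurable f)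
    (hf : ∀ x ∈ s, 0 ≤ f x) (g : α → ℝ) :
    Integrable g ((μ.restrict s).withDensity (fun x => ENNReal.ofReal (f x)))
      ↔ IntegrableOn (fun x => g x * f x) s μ := by
  rw [integrable_withDensity_iff_integrable_smul' hfm.ennreal_ofReal
    (ae_of_all _ fun _ => ENNReal.ofReal_lt_top)]
  refine integrableOn_congr_fun (fun x hx => ?_) hs
  rw [ENNReal.toReal_ofReal (hf x hx), smul_eq_mul, mul_comm]

end WithDensity

noncomputable def QdensMeasure (u v : ℝ) : Measure ℝ :=
  (volume.restrict (Ioi 0)).withDensity fun t => ENNReal.ofReal (Qdens u v t)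

section QdensMeasure

variable {p u v : ℝ}

lemma Qmeas_eq (hu : 0 < u) (hv : 0 < v) :
    Qmeas (u, v) = (QdensMeasure u v).map (fun t => (t, 0))
      + (QdensMeasure v u).map (fun t => (0, t)) := by
  rw [Qmeas, if_pos ⟨hu, hv⟩]
  rfl

lemma integral_QdensMeasure (hu : 0 < u) (hv : 0 < v) (g : ℝ → ℝ) :
    ∫ t, g t ∂QdensMeasure u v = ∫ t in Ioi 0, g t * Qdens u v t :=
  integral_restrict_withDensity_ofReal measurableSet_Ioi (continuous_Qdens hv).measurable
    (fun _ ht => Qdens_nonneg hu.le hv.le (le_of_lt ht)) g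

lemma integrable_rpow_QdensMeasure (hp0 : 0 ≤ p) (hp : p < 2) (hu : 0 < u) (hv : 0 < v) :
    Integrable (fun t => t ^ p) (QdensMeasure u v) :=
  (integrable_restrict_withDensity_ofReal_iff measurableSet_Ioi (continuous_Qdens hv).measurable
    (fun _ ht => Qdens_nonneg hu.le hv.le (le_of_lt ht)) _).2
    (integrableOn_rpow_mul_Qdens hp0 hp hu hv)

lemma isFiniteMeasure_QdensMeasure (hu : 0 < u) (hv : 0 < v) : IsFiniteMeasure (QdensMeasure u v) :=
  isFiniteMeasure_withDensity_ofReal <| by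
    simpa only [rpow_zero, one_mul] using (integrableOn_rpow_mul_Qdens le_rfl two_pos hu hv).2

lemma measureReal_univ_QdensMeasure_le_one (hu : 0 < u) (hv : 0 < v) :
    (QdensMeasure u v).real univ ≤ 1 := by
  have h := integral_QdensMeasure hu hv fun _ => 1
  rw [integral_const, smul_eq_mul, mul_one] at h
  simpa only [h, one_mul] using integral_Qdens_le_one hu hv

lemma ae_nonneg_QdensMeasure : ∀ᵐ t ∂QdensMeasure u v, 0 ≤ t :=
  (withDensity_absolutelyContinuous _ _).ae_le <|
    ae_restrict_of_forall_mem measurableSet_Ioi fun _ ht => le_of_lt ht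

lemma integral_id_QdensMeasure (hu : 0 < u) (hv : 0 < v) : ∫ t, t ∂QdensMeasure u v = u := by
  rw [integral_QdensMeasure hu hv, integral_mul_Qdens hu hv]

end QdensMeasure

theorem rpow_integral_le_integral_rpow {α : Type*} [MeasurableSpace α] {μ : Measure α}
    [IsFiniteMeasure μ] (hμ : μ.real univ ≤ 1) {p : ℝ} (hp : 1 ≤ p) {f : α → ℝ}
    (hf0 : ∀ᵐ x ∂μ, 0 ≤ f x) (hf : Integrable f μ) (hfp : Integrable (fun x => f x ^ p) μ) :
    (∫ x, f x ∂μ) ^ p ≤ ∫ x, f x ^ p ∂μ := by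
  rcases eq_zero_or_neZero μ with rfl | hμ0
  · simp [zero_rpow (by linarith : p ≠ 0)]
  have hm : 0 < μ.real univ := measureReal_univ_pos
  have hjensen := (convexOn_rpow hp).map_average_le
    (continuous_rpow_const (by linarith)).continuousOn isClosed_Ici hf0 hf hfp
  have ha : 0 ≤ ∫ x, f x ∂μ := integral_nonneg_of_ae hf0
  have hb : 0 ≤ ∫ x, f x ^ p ∂μ := integral_nonneg_of_ae (hf0.mono fun x hx => rpow_nonneg hx p)
  rw [average_eq, average_eq, smul_eq_mul, smul_eq_mul, mul_rpow (inv_nonneg.2 hm.le) ha,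
    inv_rpow hm.le] at hjensen
  calc (∫ x, f x ∂μ) ^ p = μ.real univ ^ p * ((μ.real univ ^ p)⁻¹ * (∫ x, f x ∂μ) ^ p) := by
        field_simp
    _ ≤ μ.real univ ^ p * ((μ.real univ)⁻¹ * ∫ x, f x ^ p ∂μ) := by gcongr
    _ = μ.real univ ^ (p - 1) * ∫ x, f x ^ p ∂μ := by
        rw [rpow_sub_one hm.ne']
        ring
    _ ≤ ∫ x, f x ^ p ∂μ :=
        mul_le_of_le_one_left hb (rpow_le_one hm.le hμ (by linarith))

theorem integral_comp_fst_map_add_map {α β : Type*} [MeasurableSpace α] [MeasurableSpace β]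
    [MeasurableSingletonClass α] [MeasurableSingletonClass β] {ν₁ : Measure α} {ν₂ : Measure β}
    {a : α} {b : β} {g : α → ℝ} (hga : g a = 0) (hg : Integrable g ν₁) :
    ∫ y, g y.1 ∂(ν₁.map (fun t => (t, b)) + ν₂.map (fun t => (a, t))) = ∫ t, g t ∂ν₁ := by
  have e₁ : MeasurableEmbedding fun t : α => (t, b) := measurableEmbedding_prod_mk_right b
  have e₂ : MeasurableEmbedding fun t : β => (a, t) := measurableEmbedding_prodMk_left a
  have hg₂ : Integrable (fun y : α × β => g y.1) (ν₂.map fun t => (a, t)) := by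
    rw [e₂.integrable_map_iff]
    simp only [Function.comp_def, hga]
    exact integrable_zero _ _ _
  have hg₁ : Integrable (fun y : α × β => g y.1) (ν₁.map fun t => (t, b)) :=
    e₁.integrable_map_iff.2 hg
  rw [integral_add_measure hg₁ hg₂, e₁.integral_map, e₂.integral_map]
  simp only [hga, integral_zero, add_zero]

lemma Qmeas_map_swap (x : ℝ × ℝ) : (Qmeas x).map Prod.swap = Qmeas x.swap := by
  unfold Qmeas
  by_cases hx : 0 < x.1 ∧ 0 < x.2
  · rw [if_pos hx, if_pos ⟨hx.2, hx.1⟩, Measure.map_add _ _ measurable_swap,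
      Measure.map_map measurable_swap (by fun_prop), Measure.map_map measurable_swap (by fun_prop),
      add_comm]
    rfl
  · rw [if_neg hx, if_neg fun h => hx ⟨h.2, h.1⟩, Measure.map_dirac' measurable_swap]

lemma integral_comp_snd_Qmeas (x : ℝ × ℝ) (g : ℝ → ℝ) :
    ∫ y, g y.2 ∂Qmeas x = ∫ y, g y.1 ∂Qmeas x.swap := by
  rw [← Qmeas_map_swap]
  exact (integral_map_equiv (MeasurableEquiv.prodComm (α := ℝ) (β := ℝ)) fun y => g y.1).symm

lemma rpow_le_integral_fst_rpow_Qmeas {p u v : ℝ} (hp1 : 1 ≤ p) (hp2 : p < 2) (hu : 0 < u)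
    (hv : 0 < v) : u ^ p ≤ ∫ y, y.1 ^ p ∂Qmeas (u, v) := by
  have := isFiniteMeasure_QdensMeasure hu hv
  rw [Qmeas_eq hu hv, integral_comp_fst_map_add_map (g := fun t => t ^ p) (zero_rpow (by linarith))
    (integrable_rpow_QdensMeasure (by linarith) hp2 hu hv)]
  calc u ^ p = (∫ t, t ∂QdensMeasure u v) ^ p := by rw [integral_id_QdensMeasure hu hv]
    _ ≤ ∫ t, t ^ p ∂QdensMeasure u v :=
      rpow_integral_le_integral_rpow (measureReal_univ_QdensMeasure_le_one hu hv) hp1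
        ae_nonneg_QdensMeasure
        (by simpa only [rpow_one] using integrable_rpow_QdensMeasure zero_le_one one_lt_two hu hv)
        (integrable_rpow_QdensMeasure (by linarith) hp2 hu hv)

/-- For `p ∈ (1,2)` and `u, v > 0`, the `p`-th moment of each coordinate under the
harmonic measure dominates the `p`-th power of the starting coordinate:
`∫ y₁^p Q_{(u,v)}(dy) ≥ u^p` and `∫ y₂^p Q_{(u,v)}(dy) ≥ v^p`. -/
theorem harmonic_measure_moment_lower_bound (p : ℝ) (hp1 : 1 < p) (hp2 : p < 2)
    (u v : ℝ) (hu : 0 < u) (hv : 0 < v) :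
    u ^ p ≤ (∫ y, y.1 ^ p ∂(Qmeas (u, v)))
      ∧ v ^ p ≤ (∫ y, y.2 ^ p ∂(Qmeas (u, v))) := by
  refine ⟨rpow_le_integral_fst_rpow_Qmeas hp1.le hp2 hu hv, ?_⟩
  rw [integral_comp_snd_Qmeas (u, v) fun t => t ^ p]
  exact rpow_le_integral_fst_rpow_Qmeas hp1.le hp2 hv hu
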